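/- arXiv:1810.10466 — 7 statements merged into one kernel-verified Lean document; each statement's English description precedes it below -/
import Mathlib

section
/- For any p ∈ [1, ∞) and any translation vector t ∈ ℝ², there exists a point-to-point translation t₀ ∈ T with optcost(t₀) ≤ 2 · optcost(t). In particular, there is a t₀ ∈ T whose optimal cost is at most twice the minimum of optcost over all translations. -/
open scoped RealInnerProductSpace Classical

noncomputable section

/-- Points in the Euclidean plane. -/
abbrev Pt : Type := EuclideanSpace ℝ (Fin 2)

/-- A `k`-matching between `A` and `B`: a set of `k` pairs in `A × B` such that
each point of `A` and each point of `B` occurs in at most one pair. -/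
def IsMatching (A B : Finset Pt) (k : ℕ) (M : Finset (Pt × Pt)) : Prop :=
  M ⊆ A ×ˢ B ∧ M.card = k ∧
    (∀ e ∈ M, ∀ e' ∈ M, e.1 = e'.1 → e = e') ∧
    (∀ e ∈ M, ∀ e' ∈ M, e.2 = e'.2 → e = e')

/-- The `L_p`-cost of a matching `M` at translation `t`, for `p ∈ [1, ∞)`:
`((1/k) · Σ_{(a,b) ∈ M} ‖a + t − b‖^p)^(1/p)`. -/
def cost (p : ℝ) (k : ℕ) (M : Finset (Pt × Pt)) (t : Pt) : ℝ :=
  ((1 / (k : ℝ)) * ∑ e ∈ M, ‖e.1 + t - e.2‖ ^ p) ^ (1 / p)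

/-- The optimal cost at translation `t`: the minimum of `cost p k M t`
over all `k`-matchings `M` between `A` and `B`. -/
def optcost (A B : Finset Pt) (k : ℕ) (p : ℝ) (t : Pt) : ℝ :=
  sInf {c : ℝ | ∃ M : Finset (Pt × Pt), IsMatching A B k M ∧ c = cost p k M t}

/-- The set of point-to-point translations `T = {b − a : a ∈ A, b ∈ B}`. -/
def ptpTranslations (A B : Finset Pt) : Set Pt :=
  {x : Pt | ∃ a ∈ A, ∃ b ∈ B, x = b - a}


lemma exists_matching (A B : Finset Pt) (k : ℕ)
    (hkA : k ≤ A.card) (hkB : k ≤ B.card) :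
    ∃ M : Finset (Pt × Pt), IsMatching A B k M := by
  obtain ⟨A', hA'sub, hA'card⟩ := Finset.exists_subset_card_eq hkA
  obtain ⟨B', hB'sub, hB'card⟩ := Finset.exists_subset_card_eq hkB
  have hcard : A'.card = B'.card := by rw [hA'card, hB'card]
  let e : ↥A' ≃ ↥B' := Finset.equivOfCardEq hcard
  refine ⟨A'.attach.image (fun a => (a.1, (e a).1)), ?_, ?_, ?_, ?_⟩
  · intro x hx
    simp only [Finset.mem_image, Finset.mem_attach, true_and] at hx
    obtain ⟨a, rfl⟩ := hx
    exact Finset.mem_product.2 ⟨hA'sub a.2, hB'sub (e a).2⟩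
  · rw [Finset.card_image_of_injective, Finset.card_attach, hA'card]
    intro a a' h
    exact Subtype.ext (congrArg Prod.fst h)
  · intro x hx y hy hxy
    simp only [Finset.mem_image, Finset.mem_attach, true_and] at hx hy
    obtain ⟨a, rfl⟩ := hx
    obtain ⟨a', rfl⟩ := hy
    have : a = a' := Subtype.ext hxy
    subst this; rfl
  · intro x hx y hy hxy
    simp only [Finset.mem_image, Finset.mem_attach, true_and] at hx hy
    obtain ⟨a, rfl⟩ := hx
    obtain ⟨a', rfl⟩ := hy
    have : e a = e a' := Subtype.ext hxy
    have : a = a' := e.injective this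
    subst this; rfl

lemma cost_nonneg (p : ℝ) (k : ℕ) (M : Finset (Pt × Pt)) (t : Pt) :
    0 ≤ cost p k M t := by
  apply Real.rpow_nonneg
  apply mul_nonneg (by positivity)
  exact Finset.sum_nonneg fun e _ => Real.rpow_nonneg (norm_nonneg _) p

lemma cost_two_bound (p : ℝ) (hp : 1 ≤ p) (k : ℕ) (M : Finset (Pt × Pt)) (t t₀ : Pt)
    (h : ∀ e ∈ M, ‖e.1 + t₀ - e.2‖ ≤ 2 * ‖e.1 + t - e.2‖) :
    cost p k M t₀ ≤ 2 * cost p k M t := by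
  have hp0 : 0 < p := lt_of_lt_of_le one_pos hp
  have hterm : ∀ e ∈ M, ‖e.1 + t₀ - e.2‖ ^ p ≤ (2 : ℝ) ^ p * ‖e.1 + t - e.2‖ ^ p := by
    intro e he
    calc ‖e.1 + t₀ - e.2‖ ^ p ≤ (2 * ‖e.1 + t - e.2‖) ^ p :=
          Real.rpow_le_rpow (norm_nonneg _) (h e he) hp0.le
      _ = (2 : ℝ) ^ p * ‖e.1 + t - e.2‖ ^ p :=
          Real.mul_rpow (by norm_num) (norm_nonneg _)
  have hS : (0 : ℝ) ≤ ∑ e ∈ M, ‖e.1 + t - e.2‖ ^ p :=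
    Finset.sum_nonneg fun e _ => Real.rpow_nonneg (norm_nonneg _) p
  have hsum : (1 / (k : ℝ)) * ∑ e ∈ M, ‖e.1 + t₀ - e.2‖ ^ p
      ≤ (2 : ℝ) ^ p * ((1 / (k : ℝ)) * ∑ e ∈ M, ‖e.1 + t - e.2‖ ^ p) := by
    have := Finset.sum_le_sum hterm
    rw [← Finset.mul_sum] at this
    calc (1 / (k : ℝ)) * ∑ e ∈ M, ‖e.1 + t₀ - e.2‖ ^ p
        ≤ (1 / (k : ℝ)) * ((2 : ℝ) ^ p * ∑ e ∈ M, ‖e.1 + t - e.2‖ ^ p) :=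
          mul_le_mul_of_nonneg_left this (by positivity)
      _ = (2 : ℝ) ^ p * ((1 / (k : ℝ)) * ∑ e ∈ M, ‖e.1 + t - e.2‖ ^ p) := by ring
  have hnn : (0 : ℝ) ≤ (1 / (k : ℝ)) * ∑ e ∈ M, ‖e.1 + t₀ - e.2‖ ^ p := by
    apply mul_nonneg (by positivity)
    exact Finset.sum_nonneg fun e _ => Real.rpow_nonneg (norm_nonneg _) p
  calc cost p k M t₀
      ≤ ((2 : ℝ) ^ p * ((1 / (k : ℝ)) * ∑ e ∈ M, ‖e.1 + t - e.2‖ ^ p)) ^ (1 / p) :=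
        Real.rpow_le_rpow hnn hsum (by positivity)
    _ = ((2 : ℝ) ^ p) ^ (1 / p) * ((1 / (k : ℝ)) * ∑ e ∈ M, ‖e.1 + t - e.2‖ ^ p) ^ (1 / p) :=
        Real.mul_rpow (by positivity) (by positivity)
    _ = 2 * cost p k M t := by
        rw [← Real.rpow_mul (by norm_num : (0:ℝ) ≤ 2), mul_one_div_cancel hp0.ne',
          Real.rpow_one, cost]

theorem exists_ptp_translation_two_approx (A B : Finset Pt) (k : ℕ) (hk : 0 < k)
    (hkA : k ≤ A.card) (hkB : k ≤ B.card)
    (p : ℝ) (hp : 1 ≤ p) (t : Pt) :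
    ∃ t₀ ∈ ptpTranslations A B, optcost A B k p t₀ ≤ 2 * optcost A B k p t := by
  classical
  -- The set of achievable costs at any translation is the image of a finset.
  set S : Pt → Finset ℝ := fun s =>
    ((A ×ˢ B).powerset.filter (fun M => IsMatching A B k M)).image (fun M => cost p k M s)
    with hS
  have hSeq : ∀ s : Pt,
      {c : ℝ | ∃ M : Finset (Pt × Pt), IsMatching A B k M ∧ c = cost p k M s} = ↑(S s) := by
    intro s
    ext c
    simp only [Set.mem_setOf_eq, hS, Finset.coe_image, Set.mem_image, Finset.mem_coe,
      Finset.mem_filter, Finset.mem_powerset]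
    constructor
    · rintro ⟨M, hM, rfl⟩
      exact ⟨M, ⟨hM.1, hM⟩, rfl⟩
    · rintro ⟨M, ⟨_, hM⟩, rfl⟩
      exact ⟨M, hM, rfl⟩
  obtain ⟨M₀, hM₀⟩ := exists_matching A B k hkA hkB
  have hne : (↑(S t) : Set ℝ).Nonempty := by
    rw [← hSeq t]; exact ⟨cost p k M₀ t, M₀, hM₀, rfl⟩
  have hmem : optcost A B k p t ∈ {c : ℝ | ∃ M : Finset (Pt × Pt),
      IsMatching A B k M ∧ c = cost p k M t} := by
    rw [hSeq t]
    rw [optcost, hSeq t]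
    exact Set.Nonempty.csInf_mem hne (Finset.finite_toSet _)
  obtain ⟨M, hM, hMcost⟩ := hmem
  -- M is nonempty
  have hMne : M.Nonempty := by
    rw [← Finset.card_pos, hM.2.1]; exact hk
  obtain ⟨em, hem, hemmin⟩ := Finset.exists_min_image M (fun e => ‖e.1 + t - e.2‖) hMne
  have hemAB : em ∈ A ×ˢ B := hM.1 hem
  refine ⟨em.2 - em.1, ⟨em.1, (Finset.mem_product.1 hemAB).1, em.2,
    (Finset.mem_product.1 hemAB).2, rfl⟩, ?_⟩
  set t₀ : Pt := em.2 - em.1 with ht₀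
  have hbound : ∀ e ∈ M, ‖e.1 + t₀ - e.2‖ ≤ 2 * ‖e.1 + t - e.2‖ := by
    intro e he
    have hrw : e.1 + t₀ - e.2 = (e.1 + t - e.2) - (em.1 + t - em.2) := by
      rw [ht₀]; abel
    calc ‖e.1 + t₀ - e.2‖ = ‖(e.1 + t - e.2) - (em.1 + t - em.2)‖ := by rw [hrw]
      _ ≤ ‖e.1 + t - e.2‖ + ‖em.1 + t - em.2‖ := norm_sub_le _ _
      _ ≤ ‖e.1 + t - e.2‖ + ‖e.1 + t - e.2‖ := by
          have := hemmin e he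
          linarith
      _ = 2 * ‖e.1 + t - e.2‖ := by ring
  have h1 : optcost A B k p t₀ ≤ cost p k M t₀ := by
    rw [optcost]
    apply csInf_le
    · rw [hSeq t₀]; exact (Finset.finite_toSet _).bddBelow
    · exact ⟨M, hM, rfl⟩
  have h2 : cost p k M t₀ ≤ 2 * cost p k M t := cost_two_bound p hp k M t t₀ hbound
  rw [hMcost]
  linarith
end
end

section
/- For p = 2: if t* ∈ ℝ² is a global minimizer of optcost, i.e., optcost(t*) ≤ optcost(t) for all t ∈ ℝ², and M* is a k-matching with cost(M*, t*) = optcost(t*), then the sum of residual vectors vanishes: Σ_{(a,b)∈M*} (a + t* − b) = 0. -/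
open scoped RealInnerProductSpace Classical

noncomputable section

theorem residual_sum_eq_zero_at_optimum (A B : Finset Pt) (k : ℕ) (hk : 0 < k)
    (hkA : k ≤ A.card) (hkB : k ≤ B.card)
    (tstar : Pt) (hstar : ∀ t : Pt, optcost A B k 2 tstar ≤ optcost A B k 2 t)
    (Mstar : Finset (Pt × Pt)) (hMstar : IsMatching A B k Mstar)
    (hopt : cost 2 k Mstar tstar = optcost A B k 2 tstar) :
    ∑ e ∈ Mstar, (e.1 + tstar - e.2) = 0 := by
  have hk0 : (0:ℝ) < k := Nat.cast_pos.mpr hk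
  have hnonneg : ∀ (M : Finset (Pt × Pt)) (t : Pt), 0 ≤ cost 2 k M t := by
    intro M t
    apply Real.rpow_nonneg
    have : 0 ≤ ∑ e ∈ M, ‖e.1 + t - e.2‖ ^ (2:ℝ) :=
      Finset.sum_nonneg fun e _ => Real.rpow_nonneg (norm_nonneg _) _
    positivity
  have hle : ∀ t, optcost A B k 2 t ≤ cost 2 k Mstar t := by
    intro t
    apply csInf_le
    · exact ⟨0, by rintro c ⟨M, hM, rfl⟩; exact hnonneg M t⟩
    · exact ⟨Mstar, hMstar, rfl⟩
  have hcost : ∀ t, cost 2 k Mstar tstar ≤ cost 2 k Mstar t := fun t =>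
    hopt ▸ le_trans (hstar t) (hle t)
  -- pass from rpow to sums of squares
  have hsum : ∀ t, ∑ e ∈ Mstar, ‖e.1 + tstar - e.2‖ ^ 2
      ≤ ∑ e ∈ Mstar, ‖e.1 + t - e.2‖ ^ 2 := by
    intro t
    have h := hcost t
    unfold cost at h
    set x := (1/(k:ℝ)) * ∑ e ∈ Mstar, ‖e.1 + tstar - e.2‖ ^ (2:ℝ) with hx
    set y := (1/(k:ℝ)) * ∑ e ∈ Mstar, ‖e.1 + t - e.2‖ ^ (2:ℝ) with hy
    have hx0 : 0 ≤ x := by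
      have : 0 ≤ ∑ e ∈ Mstar, ‖e.1 + tstar - e.2‖ ^ (2:ℝ) :=
        Finset.sum_nonneg fun e _ => Real.rpow_nonneg (norm_nonneg _) _
      positivity
    have hy0 : 0 ≤ y := by
      have : 0 ≤ ∑ e ∈ Mstar, ‖e.1 + t - e.2‖ ^ (2:ℝ) :=
        Finset.sum_nonneg fun e _ => Real.rpow_nonneg (norm_nonneg _) _
      positivity
    have hxy : x ≤ y := by
      by_contra hcon
      push_neg at hcon
      have := Real.rpow_lt_rpow hy0 hcon (by norm_num : (0:ℝ) < 1/2)
      exact absurd h (not_le.mpr this)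
    have hxy' : ∑ e ∈ Mstar, ‖e.1 + tstar - e.2‖ ^ (2:ℝ)
        ≤ ∑ e ∈ Mstar, ‖e.1 + t - e.2‖ ^ (2:ℝ) := by
      rw [hx, hy] at hxy
      exact (mul_le_mul_iff_right₀ (by positivity : (0:ℝ) < 1/(k:ℝ))).mp hxy
    have hpow : ∀ v : Pt, ‖v‖ ^ (2:ℝ) = ‖v‖ ^ 2 := fun v => by
      rw [show (2:ℝ) = ((2:ℕ):ℝ) from by norm_num, Real.rpow_natCast]
    simp only [hpow] at hxy'
    exact hxy'
  -- quadratic expansion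
  set S := ∑ e ∈ Mstar, (e.1 + tstar - e.2) with hSdef
  have hexp : ∀ s : Pt, ∑ e ∈ Mstar, ‖e.1 + (tstar + s) - e.2‖ ^ 2
      = (∑ e ∈ Mstar, ‖e.1 + tstar - e.2‖ ^ 2) + 2 * ⟪S, s⟫ + k * ‖s‖ ^ 2 := by
    intro s
    have : ∀ e ∈ Mstar, ‖e.1 + (tstar + s) - e.2‖ ^ 2
        = ‖e.1 + tstar - e.2‖ ^ 2 + 2 * ⟪e.1 + tstar - e.2, s⟫ + ‖s‖ ^ 2 := by
      intro e _
      have : e.1 + (tstar + s) - e.2 = (e.1 + tstar - e.2) + s := by abel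
      rw [this, norm_add_sq_real]
    rw [Finset.sum_congr rfl this, Finset.sum_add_distrib, Finset.sum_add_distrib,
      Finset.sum_const, hMstar.2.1, nsmul_eq_mul, ← Finset.mul_sum, hSdef, sum_inner]
  -- apply with s = -(1/k) • S
  have key := hsum (tstar + (-(1/(k:ℝ)) • S))
  rw [hexp (-(1/(k:ℝ)) • S)] at key
  have h1 : ⟪S, -(1/(k:ℝ)) • S⟫ = -(1/(k:ℝ)) * (‖S‖^2) := by
    rw [inner_smul_right, real_inner_self_eq_norm_sq]
  have h2 : ‖-(1/(k:ℝ)) • S‖^2 = (1/(k:ℝ))^2 * ‖S‖^2 := by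
    rw [norm_smul]
    simp [abs_of_nonneg (le_of_lt (by positivity : (0:ℝ) < 1/(k:ℝ)))]
    ring
  rw [h1, h2] at key
  have hS2 : ‖S‖^2 ≤ 0 := by
    have : 0 ≤ 2 * (-(1/(k:ℝ)) * ‖S‖^2) + (k:ℝ) * ((1/(k:ℝ))^2 * ‖S‖^2) := by linarith
    have heq : 2 * (-(1/(k:ℝ)) * ‖S‖^2) + (k:ℝ) * ((1/(k:ℝ))^2 * ‖S‖^2)
        = -(1/(k:ℝ)) * ‖S‖^2 := by field_simp; ring
    rw [heq] at this
    nlinarith [sq_nonneg ‖S‖, one_div_pos.mpr hk0]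
  have : ‖S‖ = 0 := by nlinarith [norm_nonneg S]
  exact norm_eq_zero.mp this
end
end

section
/- For p = 2: if t* ∈ ℝ² is a global minimizer of optcost, i.e., optcost(t*) ≤ optcost(t) for all t ∈ ℝ², and M* is a k-matching with cost(M*, t*) = optcost(t*), then for every translation vector Δ ∈ ℝ², cost(M*, t* + Δ) = √(optcost(t*)² + ‖Δ‖²). -/
open scoped RealInnerProductSpace Classical

noncomputable section

theorem cost_translate_at_optimum (A B : Finset Pt) (k : ℕ) (hk : 0 < k)
    (hkA : k ≤ A.card) (hkB : k ≤ B.card)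
    (tstar : Pt) (hstar : ∀ t : Pt, optcost A B k 2 tstar ≤ optcost A B k 2 t)
    (Mstar : Finset (Pt × Pt)) (hMstar : IsMatching A B k Mstar)
    (hopt : cost 2 k Mstar tstar = optcost A B k 2 tstar) (Δ : Pt) :
    cost 2 k Mstar (tstar + Δ) =
      Real.sqrt ((optcost A B k 2 tstar) ^ 2 + ‖Δ‖ ^ 2) := by

  classical
  have hk' : (0:ℝ) < k := by exact_mod_cast hk
  set v : Pt × Pt → Pt := fun e => e.1 + tstar - e.2 with hv
  set F : Pt → ℝ := fun d => (1 / (k:ℝ)) * ∑ e ∈ Mstar, ‖v e + d‖ ^ 2 with hF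
  have hFnn : ∀ d : Pt, 0 ≤ F d := by
    intro d
    apply mul_nonneg (by positivity)
    exact Finset.sum_nonneg fun e _ => by positivity
  have hcost : ∀ d : Pt, cost 2 k Mstar (tstar + d) = Real.sqrt (F d) := by
    intro d
    have hterm : ∀ e ∈ Mstar, ‖e.1 + (tstar + d) - e.2‖ ^ (2:ℝ) = ‖v e + d‖ ^ 2 := by
      intro e _
      have h1 : e.1 + (tstar + d) - e.2 = v e + d := by simp only [hv]; abel
      rw [h1, show (2:ℝ) = ((2:ℕ):ℝ) by norm_num, Real.rpow_natCast]
    rw [cost, Finset.sum_congr rfl hterm, Real.sqrt_eq_rpow]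
  have hcost0 : cost 2 k Mstar tstar = Real.sqrt (F 0) := by
    have := hcost 0
    rwa [add_zero] at this
  set S : Pt := ∑ e ∈ Mstar, v e with hS
  have hFd : ∀ d : Pt, F d = F 0 + (2 / (k:ℝ)) * ⟪S, d⟫ + ‖d‖ ^ 2 := by
    intro d
    have hexp : ∀ e ∈ Mstar, ‖v e + d‖ ^ 2 = ‖v e‖ ^ 2 + 2 * ⟪v e, d⟫ + ‖d‖ ^ 2 :=
      fun e _ => norm_add_sq_real _ _
    have hsum : ∑ e ∈ Mstar, ‖v e + d‖ ^ 2
        = (∑ e ∈ Mstar, ‖v e‖ ^ 2) + 2 * ⟪S, d⟫ + (k:ℝ) * ‖d‖ ^ 2 := by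
      rw [Finset.sum_congr rfl hexp, Finset.sum_add_distrib, Finset.sum_add_distrib,
        Finset.sum_const, hMstar.2.1, nsmul_eq_mul, ← Finset.mul_sum, hS, sum_inner]
    have hF0 : F 0 = (1 / (k:ℝ)) * ∑ e ∈ Mstar, ‖v e‖ ^ 2 := by
      simp [hF]
    simp only [hF]
    rw [hsum]
    simp only [add_zero]
    field_simp
  have hle : ∀ d : Pt, F 0 ≤ F d := by
    intro d
    have hbdd : ∀ c ∈ {c : ℝ | ∃ M : Finset (Pt × Pt), IsMatching A B k M ∧
        c = cost 2 k M (tstar + d)}, (0:ℝ) ≤ c := by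
      rintro c ⟨M, _, rfl⟩
      apply Real.rpow_nonneg
      apply mul_nonneg (by positivity)
      exact Finset.sum_nonneg fun e _ => Real.rpow_nonneg (norm_nonneg _) _
    have h2 : optcost A B k 2 (tstar + d) ≤ cost 2 k Mstar (tstar + d) :=
      csInf_le ⟨0, hbdd⟩ ⟨Mstar, hMstar, rfl⟩
    have h1 : cost 2 k Mstar tstar ≤ cost 2 k Mstar (tstar + d) := by
      rw [hopt]; exact le_trans (hstar _) h2
    rw [hcost0, hcost d] at h1
    calc F 0 = Real.sqrt (F 0) ^ 2 := (Real.sq_sqrt (hFnn 0)).symm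
      _ ≤ Real.sqrt (F d) ^ 2 := by
          apply pow_le_pow_left₀ (Real.sqrt_nonneg _) h1
      _ = F d := Real.sq_sqrt (hFnn d)
  have hS0 : S = 0 := by
    have h := hle (-((k:ℝ)⁻¹ • S))
    rw [hFd (-((k:ℝ)⁻¹ • S))] at h
    have hin : ⟪S, -((k:ℝ)⁻¹ • S)⟫ = -((k:ℝ)⁻¹ * ‖S‖ ^ 2) := by
      rw [inner_neg_right, inner_smul_right, real_inner_self_eq_norm_sq]
    have hnr : ‖-((k:ℝ)⁻¹ • S)‖ ^ 2 = (k:ℝ)⁻¹ ^ 2 * ‖S‖ ^ 2 := by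
      rw [norm_neg, norm_smul]
      simp [mul_pow, abs_of_pos (inv_pos.mpr hk')]
    rw [hin, hnr] at h
    have hkinv : (0:ℝ) < (k:ℝ)⁻¹ := inv_pos.mpr hk'
    have hdiv : (2:ℝ)/(k:ℝ) = 2*(k:ℝ)⁻¹ := by rw [div_eq_mul_inv]
    rw [hdiv] at h
    have hSnn : ‖S‖ ^ 2 ≤ 0 := by nlinarith [sq_nonneg ‖S‖, mul_pos hkinv hkinv]
    have : ‖S‖ = 0 := by nlinarith [sq_nonneg ‖S‖, norm_nonneg S]
    exact norm_eq_zero.mp this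
  have hopt2 : (optcost A B k 2 tstar) ^ 2 = F 0 := by
    rw [← hopt, hcost0, Real.sq_sqrt (hFnn 0)]
  rw [hcost Δ, hFd Δ, hS0, hopt2]
  simp
end
end

section
/- For any p ∈ [1, ∞): let t ∈ ℝ² be an arbitrary translation, let t₀ ∈ T be the nearest neighbor of t in T (i.e., ‖t − t₀‖ = min_{t'∈T} ‖t − t'‖), and let M₀ be a k-matching with cost(M₀, t₀) = optcost(t₀). Then optcost(t) ≤ cost(M₀, t) ≤ 3 · optcost(t). -/
open scoped RealInnerProductSpace Classical

noncomputable section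

lemma const_rpow_eq (p : ℝ) (hp : 1 ≤ p) (k : ℕ) (hk : 0 < k) {c : ℝ} (hc : 0 ≤ c) :
    ((1 / (k : ℝ)) * ((k : ℝ) * c ^ p)) ^ (1 / p) = c := by
  have hp0 : (0:ℝ) < p := lt_of_lt_of_le one_pos hp
  have hkR : (0:ℝ) < k := Nat.cast_pos.mpr hk
  have h1 : (1 / (k : ℝ)) * ((k : ℝ) * c ^ p) = c ^ p := by
    field_simp
  rw [h1, ← Real.rpow_mul hc, mul_one_div_cancel hp0.ne', Real.rpow_one]

lemma cost_triangle (p : ℝ) (hp : 1 ≤ p) (k : ℕ) (hk : 0 < k)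
    (M : Finset (Pt × Pt)) (hcard : M.card = k) (t s : Pt) :
    cost p k M t ≤ cost p k M s + ‖t - s‖ := by
  have hp0 : (0:ℝ) < p := lt_of_lt_of_le one_pos hp
  have hkR : (0:ℝ) < k := Nat.cast_pos.mpr hk
  set c : ℝ := ‖t - s‖ with hcdef
  have hc : 0 ≤ c := norm_nonneg _
  have hstep : ∀ e ∈ M, ‖e.1 + t - e.2‖ ≤ ‖e.1 + s - e.2‖ + c := by
    intro e _
    have : e.1 + t - e.2 = (e.1 + s - e.2) + (t - s) := by abel
    rw [this]; exact norm_add_le _ _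
  have h1 : cost p k M t ≤
      ((1 / (k : ℝ)) * ∑ e ∈ M, (‖e.1 + s - e.2‖ + c) ^ p) ^ (1 / p) := by
    apply Real.rpow_le_rpow (by
      apply mul_nonneg (by positivity)
      exact Finset.sum_nonneg fun e _ => Real.rpow_nonneg (norm_nonneg _) _)
    · apply mul_le_mul_of_nonneg_left _ (by positivity)
      exact Finset.sum_le_sum fun e he =>
        Real.rpow_le_rpow (norm_nonneg _) (hstep e he) hp0.le
    · positivity
  refine h1.trans ?_
  have hmul : ∀ X : ℝ, 0 ≤ X → ((1 / (k : ℝ)) * X) ^ (1 / p)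
      = (1 / (k : ℝ)) ^ (1 / p) * X ^ (1 / p) := fun X hX =>
    Real.mul_rpow (by positivity) hX
  rw [hmul _ (Finset.sum_nonneg fun e _ => Real.rpow_nonneg (by positivity) _)]
  have hmink := Real.Lp_add_le_of_nonneg (s := M) (f := fun e => ‖e.1 + s - e.2‖)
    (g := fun _ => c) (p := p) hp (fun e _ => norm_nonneg _) (fun e _ => hc)
  calc (1 / (k : ℝ)) ^ (1 / p) * (∑ e ∈ M, (‖e.1 + s - e.2‖ + c) ^ p) ^ (1 / p)
      ≤ (1 / (k : ℝ)) ^ (1 / p) *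
        ((∑ e ∈ M, ‖e.1 + s - e.2‖ ^ p) ^ (1 / p) + (∑ e ∈ M, c ^ p) ^ (1 / p)) := by
        exact mul_le_mul_of_nonneg_left hmink (by positivity)
    _ = cost p k M s + ((1 / (k : ℝ)) * ∑ e ∈ M, c ^ p) ^ (1 / p) := by
        rw [mul_add, cost, hmul _ (Finset.sum_nonneg fun e _ => Real.rpow_nonneg (norm_nonneg _) _),
          hmul _ (Finset.sum_nonneg fun e _ => Real.rpow_nonneg hc _)]
    _ = cost p k M s + c := by
        rw [Finset.sum_const, hcard, nsmul_eq_mul, const_rpow_eq p hp k hk hc]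

lemma const_le_cost (p : ℝ) (hp : 1 ≤ p) (k : ℕ) (hk : 0 < k)
    (M : Finset (Pt × Pt)) (hcard : M.card = k) (t : Pt) {c : ℝ} (hc : 0 ≤ c)
    (h : ∀ e ∈ M, c ≤ ‖e.1 + t - e.2‖) : c ≤ cost p k M t := by
  have hp0 : (0:ℝ) < p := lt_of_lt_of_le one_pos hp
  have hkR : (0:ℝ) < k := Nat.cast_pos.mpr hk
  conv_lhs => rw [← const_rpow_eq p hp k hk hc]
  apply Real.rpow_le_rpow (by positivity) _ (by positivity)
  apply mul_le_mul_of_nonneg_left _ (by positivity)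
  calc (k : ℝ) * c ^ p = ∑ _e ∈ M, c ^ p := by
        rw [Finset.sum_const, hcard, nsmul_eq_mul]
    _ ≤ ∑ e ∈ M, ‖e.1 + t - e.2‖ ^ p :=
        Finset.sum_le_sum fun e he => Real.rpow_le_rpow hc (h e he) hp0.le


theorem nearest_translation_matching_three_approx (A B : Finset Pt) (k : ℕ) (hk : 0 < k)
    (hkA : k ≤ A.card) (hkB : k ≤ B.card)
    (p : ℝ) (hp : 1 ≤ p) (t t₀ : Pt) (ht₀ : t₀ ∈ ptpTranslations A B)
    (hnn : ∀ t' ∈ ptpTranslations A B, ‖t - t₀‖ ≤ ‖t - t'‖)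
    (M₀ : Finset (Pt × Pt)) (hM₀ : IsMatching A B k M₀)
    (hopt : cost p k M₀ t₀ = optcost A B k p t₀) :
    optcost A B k p t ≤ cost p k M₀ t ∧ cost p k M₀ t ≤ 3 * optcost A B k p t := by
  set S : Pt → Set ℝ := fun s =>
    {c : ℝ | ∃ M : Finset (Pt × Pt), IsMatching A B k M ∧ c = cost p k M s} with hS
  have hSfin : ∀ s, (S s).Finite := by
    intro s
    apply Set.Finite.subset (Set.Finite.image (fun M => cost p k M s)
      (s := {M : Finset (Pt × Pt) | M ⊆ A ×ˢ B}) ?_)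
    · rintro c ⟨M, hM, rfl⟩
      exact ⟨M, hM.1, rfl⟩
    · have : {M : Finset (Pt × Pt) | M ⊆ A ×ˢ B} = ↑(A ×ˢ B).powerset := by
        ext M; simp only [Set.mem_setOf_eq, Finset.mem_coe, Finset.mem_powerset]
      rw [this]; exact Finset.finite_toSet _
  have hbdd : ∀ s, BddBelow (S s) := by
    rintro s
    exact ⟨0, by rintro c ⟨M, hM, rfl⟩; exact cost_nonneg p k M s⟩
  have hmem : ∀ s, cost p k M₀ s ∈ S s := fun s => ⟨M₀, hM₀, rfl⟩
  -- first inequality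
  have h1 : optcost A B k p t ≤ cost p k M₀ t := csInf_le (hbdd t) (hmem t)
  refine ⟨h1, ?_⟩
  -- optimal matching at t
  have hattain : sInf (S t) ∈ S t :=
    Set.Nonempty.csInf_mem ⟨cost p k M₀ t, hmem t⟩ (hSfin t)
  obtain ⟨Ms, hMs, hMseq⟩ := hattain
  have heq : optcost A B k p t = cost p k Ms t := hMseq
  set d : ℝ := ‖t - t₀‖ with hd
  have htri₀ : cost p k M₀ t ≤ cost p k M₀ t₀ + d :=
    cost_triangle p hp k hk M₀ hM₀.2.1 t t₀
  have hcs : optcost A B k p t₀ ≤ cost p k Ms t₀ := csInf_le (hbdd t₀) ⟨Ms, hMs, rfl⟩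
  have htris : cost p k Ms t₀ ≤ cost p k Ms t + d := by
    have := cost_triangle p hp k hk Ms hMs.2.1 t₀ t
    rwa [norm_sub_rev] at this
  have hdle : d ≤ cost p k Ms t := by
    apply const_le_cost p hp k hk Ms hMs.2.1 t (norm_nonneg _)
    intro e he
    have hprod := hMs.1 he
    rw [Finset.mem_product] at hprod
    have hT : e.2 - e.1 ∈ ptpTranslations A B := ⟨e.1, hprod.1, e.2, hprod.2, rfl⟩
    have := hnn _ hT
    have heq2 : t - (e.2 - e.1) = e.1 + t - e.2 := by abel
    rwa [heq2] at this
  rw [heq]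
  linarith [hopt, htri₀, hcs, htris, hdle]

end
end

section
/- For any p ∈ [1, ∞) and any two translation vectors t, t' ∈ ℝ²: if M' is a k-matching with cost(M', t') = optcost(t'), then cost(M', t) ≤ optcost(t) + 2‖t − t'‖. -/
open scoped RealInnerProductSpace Classical

noncomputable section

lemma cost_lipschitz (p : ℝ) (hp : 1 ≤ p) (k : ℕ) (hk : 0 < k)
    (M : Finset (Pt × Pt)) (hcard : M.card = k) (t t' : Pt) :
    cost p k M t ≤ cost p k M t' + ‖t - t'‖ := by
  have hp0 : 0 < p := lt_of_lt_of_le one_pos hp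
  have hkR : (0 : ℝ) < (k : ℝ) := by exact_mod_cast hk
  have hik : (0 : ℝ) ≤ 1 / (k : ℝ) := by positivity
  unfold cost
  have step1 : (∑ e ∈ M, ‖e.1 + t - e.2‖ ^ p)
      ≤ ∑ e ∈ M, (‖e.1 + t' - e.2‖ + ‖t - t'‖) ^ p := by
    refine Finset.sum_le_sum fun e _ => ?_
    refine Real.rpow_le_rpow (norm_nonneg _) ?_ hp0.le
    have he : e.1 + t - e.2 = (e.1 + t' - e.2) + (t - t') := by abel
    rw [he]; exact norm_add_le _ _
  have h2 : ((1 / (k : ℝ)) * ∑ e ∈ M, ‖e.1 + t - e.2‖ ^ p) ^ (1 / p)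
      ≤ ((1 / (k : ℝ)) * ∑ e ∈ M, (‖e.1 + t' - e.2‖ + ‖t - t'‖) ^ p) ^ (1 / p) := by
    refine Real.rpow_le_rpow ?_ (by nlinarith [step1]) (by positivity)
    have : (0:ℝ) ≤ ∑ e ∈ M, ‖e.1 + t - e.2‖ ^ p :=
      Finset.sum_nonneg fun e _ => Real.rpow_nonneg (norm_nonneg _) _
    positivity
  refine h2.trans ?_
  have hsum_nonneg : (0:ℝ) ≤ ∑ e ∈ M, (‖e.1 + t' - e.2‖ + ‖t - t'‖) ^ p :=
    Finset.sum_nonneg fun e _ => Real.rpow_nonneg (by positivity) _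
  rw [Real.mul_rpow hik hsum_nonneg]
  have mink : (∑ e ∈ M, (‖e.1 + t' - e.2‖ + ‖t - t'‖) ^ p) ^ (1 / p)
      ≤ (∑ e ∈ M, ‖e.1 + t' - e.2‖ ^ p) ^ (1 / p)
        + (∑ e ∈ M, ‖t - t'‖ ^ p) ^ (1 / p) :=
    Real.Lp_add_le_of_nonneg M hp (fun e _ => norm_nonneg _) (fun e _ => norm_nonneg _)
  have hc : (0:ℝ) ≤ (1 / (k : ℝ)) ^ (1 / p) := by positivity
  calc (1 / (k : ℝ)) ^ (1 / p) * (∑ e ∈ M, (‖e.1 + t' - e.2‖ + ‖t - t'‖) ^ p) ^ (1 / p)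
      ≤ (1 / (k : ℝ)) ^ (1 / p) * ((∑ e ∈ M, ‖e.1 + t' - e.2‖ ^ p) ^ (1 / p)
        + (∑ e ∈ M, ‖t - t'‖ ^ p) ^ (1 / p)) := by
        exact mul_le_mul_of_nonneg_left mink hc
    _ = ((1 / (k : ℝ)) * ∑ e ∈ M, ‖e.1 + t' - e.2‖ ^ p) ^ (1 / p)
        + (1 / (k : ℝ)) ^ (1 / p) * (∑ e ∈ M, ‖t - t'‖ ^ p) ^ (1 / p) := by
        rw [mul_add, Real.mul_rpow hik
          (Finset.sum_nonneg fun e _ => Real.rpow_nonneg (norm_nonneg _) _)]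
    _ = ((1 / (k : ℝ)) * ∑ e ∈ M, ‖e.1 + t' - e.2‖ ^ p) ^ (1 / p) + ‖t - t'‖ := by
        congr 1
        rw [Finset.sum_const, hcard, nsmul_eq_mul,
          ← Real.mul_rpow hik (by positivity), ← mul_assoc,
          one_div_mul_cancel hkR.ne', one_mul,
          ← Real.rpow_mul (norm_nonneg _), mul_one_div_cancel hp0.ne', Real.rpow_one]

theorem cost_optimal_matching_shifted (A B : Finset Pt) (k : ℕ) (hk : 0 < k)
    (hkA : k ≤ A.card) (hkB : k ≤ B.card)
    (p : ℝ) (hp : 1 ≤ p) (t t' : Pt)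
    (M' : Finset (Pt × Pt)) (hM' : IsMatching A B k M')
    (hopt : cost p k M' t' = optcost A B k p t') :
    cost p k M' t ≤ optcost A B k p t + 2 * ‖t - t'‖ := by
  have hbdd : ∀ t0 : Pt, BddBelow {c : ℝ | ∃ M : Finset (Pt × Pt),
      IsMatching A B k M ∧ c = cost p k M t0} := by
    intro t0
    exact ⟨0, fun c hc => by obtain ⟨M, hM, rfl⟩ := hc; exact cost_nonneg p k M t0⟩
  have hne : {c : ℝ | ∃ M : Finset (Pt × Pt),
      IsMatching A B k M ∧ c = cost p k M t}.Nonempty := ⟨cost p k M' t, M', hM', rfl⟩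
  have key : optcost A B k p t' - ‖t - t'‖ ≤ optcost A B k p t := by
    refine le_csInf hne ?_
    rintro c ⟨M, hM, rfl⟩
    have h1 : optcost A B k p t' ≤ cost p k M t' :=
      csInf_le (hbdd t') ⟨M, hM, rfl⟩
    have h2 : cost p k M t' ≤ cost p k M t + ‖t' - t‖ :=
      cost_lipschitz p hp k hk M hM.2.1 t' t
    rw [norm_sub_rev] at h2
    linarith
  have h3 : cost p k M' t ≤ cost p k M' t' + ‖t - t'‖ :=
    cost_lipschitz p hp k hk M' hM'.2.1 t t'
  rw [hopt] at h3
  linarith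
end
end

section
/- For any p ∈ [1, ∞) and any ε with 0 < ε ≤ 1: let t, t₀, t_τ ∈ ℝ² be translation vectors with ‖t − t₀‖ ≤ optcost(t₀)/√2 and ‖t − t_τ‖ ≤ (ε/(8√2)) · optcost(t₀), and let M_τ be a k-matching with cost(M_τ, t_τ) = optcost(t_τ). Then cost(M_τ, t) ≤ (1 + ε) · optcost(t). -/
open scoped RealInnerProductSpace Classical

noncomputable section

lemma optcost_nonneg (A B : Finset Pt) (k : ℕ) (p : ℝ) (t : Pt) :
    0 ≤ optcost A B k p t := by
  apply Real.sInf_nonneg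
  rintro c ⟨M, _, rfl⟩
  exact cost_nonneg p k M t

lemma optcost_le_cost (A B : Finset Pt) (k : ℕ) (p : ℝ) (t : Pt)
    (M : Finset (Pt × Pt)) (hM : IsMatching A B k M) :
    optcost A B k p t ≤ cost p k M t := by
  apply csInf_le
  · exact ⟨0, by rintro c ⟨M', _, rfl⟩; exact cost_nonneg p k M' t⟩
  · exact ⟨M, hM, rfl⟩

/-- Translation Lipschitz property of the optimal cost. -/
lemma optcost_lipschitz (A B : Finset Pt) (k : ℕ) (hk : 0 < k) (p : ℝ) (hp : 1 ≤ p)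
    (t t' : Pt) (M₀ : Finset (Pt × Pt)) (hM₀ : IsMatching A B k M₀) :
    optcost A B k p t ≤ optcost A B k p t' + ‖t - t'‖ := by
  have hne : {c : ℝ | ∃ M : Finset (Pt × Pt), IsMatching A B k M ∧ c = cost p k M t'}.Nonempty :=
    ⟨cost p k M₀ t', M₀, hM₀, rfl⟩
  have : optcost A B k p t - ‖t - t'‖ ≤ optcost A B k p t' := by
    apply le_csInf hne
    rintro c ⟨M, hM, rfl⟩
    have h1 : optcost A B k p t ≤ cost p k M t := optcost_le_cost A B k p t M hM
    have h2 : cost p k M t ≤ cost p k M t' + ‖t - t'‖ :=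
      cost_lipschitz p hp k hk M hM.2.1 t t'
    linarith
  linarith

theorem grid_cell_matching_approx_inner (A B : Finset Pt) (k : ℕ) (hk : 0 < k)
    (hkA : k ≤ A.card) (hkB : k ≤ B.card)
    (p : ℝ) (hp : 1 ≤ p) (ε : ℝ) (hε0 : 0 < ε) (hε1 : ε ≤ 1)
    (t t₀ tτ : Pt)
    (hclose : ‖t - t₀‖ ≤ optcost A B k p t₀ / Real.sqrt 2)
    (hτ : ‖t - tτ‖ ≤ ε / (8 * Real.sqrt 2) * optcost A B k p t₀)
    (Mτ : Finset (Pt × Pt)) (hMτ : IsMatching A B k Mτ)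
    (hopt : cost p k Mτ tτ = optcost A B k p tτ) :
    cost p k Mτ t ≤ (1 + ε) * optcost A B k p t := by
  set c₀ := optcost A B k p t₀ with hc₀
  set c := optcost A B k p t with hc
  have hc₀0 : 0 ≤ c₀ := optcost_nonneg A B k p t₀
  have hc0 : 0 ≤ c := optcost_nonneg A B k p t
  have hs2 : (0:ℝ) < Real.sqrt 2 := Real.sqrt_pos.mpr (by norm_num)
  have hs2sq : Real.sqrt 2 * Real.sqrt 2 = 2 := Real.mul_self_sqrt (by norm_num)
  -- cost Mτ t ≤ optcost tτ + ‖t - tτ‖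
  have h1 : cost p k Mτ t ≤ optcost A B k p tτ + ‖t - tτ‖ := by
    have := cost_lipschitz p hp k hk Mτ hMτ.2.1 t tτ
    rw [hopt] at this; exact this
  -- optcost tτ ≤ c + ‖tτ - t‖ = c + ‖t - tτ‖
  have h2 : optcost A B k p tτ ≤ c + ‖t - tτ‖ := by
    have := optcost_lipschitz A B k hk p hp tτ t Mτ hMτ
    rwa [show ‖tτ - t‖ = ‖t - tτ‖ from norm_sub_rev _ _] at this
  -- c₀ ≤ c + ‖t₀ - t‖ = c + ‖t - t₀‖
  have h3 : c₀ ≤ c + ‖t - t₀‖ := by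
    have := optcost_lipschitz A B k hk p hp t₀ t Mτ hMτ
    rwa [show ‖t₀ - t‖ = ‖t - t₀‖ from norm_sub_rev _ _] at this
  have hlb : c₀ * (1 - 1 / Real.sqrt 2) ≤ c := by
    have : c₀ ≤ c + c₀ / Real.sqrt 2 := le_trans h3 (by linarith)
    have hd : c₀ / Real.sqrt 2 = c₀ * (1 / Real.sqrt 2) := by ring
    linarith [this, hd ▸ this]
  -- key numeric fact: c₀ / (4 * √2) ≤ c
  have hkey : c₀ / (4 * Real.sqrt 2) ≤ c := by
    have h4 : c₀ * (1 - 1 / Real.sqrt 2) ≥ c₀ / (4 * Real.sqrt 2) := by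
      rw [ge_iff_le, div_le_iff₀ (by positivity)]
      have hs2le : Real.sqrt 2 ≤ 3/2 := by
        nlinarith [hs2sq, hs2.le]
      have hs2ge : (5:ℝ)/4 ≤ Real.sqrt 2 := by
        nlinarith [hs2sq, hs2.le]
      have e1 : c₀ * (1 - 1 / Real.sqrt 2) * (4 * Real.sqrt 2)
          = c₀ * (4 * Real.sqrt 2 - 4) := by
        field_simp
      rw [e1]
      nlinarith [hs2ge, hc₀0]
    linarith
  have hτ' : ‖t - tτ‖ ≤ ε / (8 * Real.sqrt 2) * c₀ := hτ
  have hfinal : 2 * (ε / (8 * Real.sqrt 2) * c₀) ≤ ε * c := by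
    have : ε / (4 * Real.sqrt 2) * c₀ ≤ ε * c := by
      have := mul_le_mul_of_nonneg_left hkey hε0.le
      calc ε / (4 * Real.sqrt 2) * c₀ = ε * (c₀ / (4 * Real.sqrt 2)) := by ring
        _ ≤ ε * c := this
    calc 2 * (ε / (8 * Real.sqrt 2) * c₀) = ε / (4 * Real.sqrt 2) * c₀ := by ring
      _ ≤ ε * c := this
  calc cost p k Mτ t ≤ c + 2 * ‖t - tτ‖ := by linarith
    _ ≤ c + 2 * (ε / (8 * Real.sqrt 2) * c₀) := by linarith
    _ ≤ c + ε * c := by linarith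
    _ = (1 + ε) * c := by ring
end
end

section
/- (Greedy disk-eating covering lemma) Let P ⊆ ℝ² be a finite set of points and j a positive integer. Let ξ₁, …, ξ_s ∈ ℝ² and ρ₁, …, ρ_s ≥ 0, and define P₁ = P and P_{i+1} = P_i \ D̄(ξ_i, ρ_i) for 1 ≤ i ≤ s, where D̄(ξ, ρ) denotes the closed disk of radius ρ centered at ξ. Assume that P_{s+1} = ∅ and that for each i, ρ_i ≤ 2ρ_i*, where ρ_i* is the minimum radius of a closed disk containing at least min(j, |P_i|) points of P_i. Then for every center t ∈ ℝ² and radius r ≥ 0 such that the closed disk D̄(t, r) contains at least j points of P, there exists an index i with ‖t − ξ_i‖ ≤ 3r. -/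
open scoped RealInnerProductSpace Classical

noncomputable section

theorem disk_eating_covering (P : Finset Pt) (j : ℕ) (hj : 0 < j)
    (s : ℕ) (ξ : ℕ → Pt) (ρ : ℕ → ℝ) (hρ : ∀ i < s, 0 ≤ ρ i)
    (Ps : ℕ → Finset Pt) (hP0 : Ps 0 = P)
    (hstep : ∀ i < s, Ps (i + 1) = (Ps i).filter (fun x => ¬ ‖x - ξ i‖ ≤ ρ i))
    (hempty : Ps s = ∅)
    (hgreedy : ∀ i < s, ∀ c : Pt, ∀ r : ℝ, 0 ≤ r →
      min j (Ps i).card ≤ ((Ps i).filter (fun x => ‖x - c‖ ≤ r)).card →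
      ρ i ≤ 2 * r)
    (t : Pt) (r : ℝ) (hr : 0 ≤ r)
    (hcover : j ≤ ((P.filter (fun x => ‖x - t‖ ≤ r)).card)) :
    ∃ i < s, ‖t - ξ i‖ ≤ 3 * r := by
  set Q := P.filter (fun x => ‖x - t‖ ≤ r) with hQ
  have hQne : Q.Nonempty := Finset.card_pos.mp (lt_of_lt_of_le hj hcover)
  have hPexists : ∃ n, ¬ Q ⊆ Ps n := ⟨s, by
    intro h
    obtain ⟨x, hx⟩ := hQne
    exact absurd (h hx) (by simp [hempty])⟩
  classical
  set n := Nat.find hPexists with hn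
  have hnspec : ¬ Q ⊆ Ps n := Nat.find_spec hPexists
  have hn0 : 0 < n := by
    rcases Nat.eq_zero_or_pos n with h | h
    · exfalso; apply hnspec; rw [h, hP0]; exact Finset.filter_subset _ _
    · exact h
  have hns : n ≤ s := Nat.find_le (by
    intro h
    obtain ⟨x, hx⟩ := hQne
    exact absurd (h hx) (by simp [hempty]))
  set i := n - 1 with hi
  have hin : i + 1 = n := Nat.succ_pred_eq_of_pos hn0
  have his : i < s := by omega
  have hQsub : Q ⊆ Ps i := by
    by_contra h
    have := Nat.find_min hPexists (m := i) (by omega)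
    exact this h
  obtain ⟨x, hxQ, hxn⟩ : ∃ x ∈ Q, x ∉ Ps n := by
    by_contra h
    push_neg at h
    exact hnspec h
  have hxi : x ∈ Ps i := hQsub hxQ
  have hxball : ‖x - ξ i‖ ≤ ρ i := by
    by_contra h
    apply hxn
    rw [← hin, hstep i his, Finset.mem_filter]
    exact ⟨hxi, h⟩
  have hρi : ρ i ≤ 2 * r := by
    apply hgreedy i his t r hr
    calc min j (Ps i).card ≤ j := min_le_left _ _
      _ ≤ Q.card := hcover
      _ ≤ ((Ps i).filter (fun x => ‖x - t‖ ≤ r)).card := by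
          apply Finset.card_le_card
          intro y hy
          rw [Finset.mem_filter]
          exact ⟨hQsub hy, (Finset.mem_filter.mp hy).2⟩
  refine ⟨i, his, ?_⟩
  have hxt : ‖x - t‖ ≤ r := (Finset.mem_filter.mp hxQ).2
  calc ‖t - ξ i‖ ≤ ‖t - x‖ + ‖x - ξ i‖ := norm_sub_le_norm_sub_add_norm_sub t x (ξ i)
    _ ≤ r + 2 * r := by
        rw [norm_sub_rev]
        exact add_le_add hxt (le_trans hxball hρi)
    _ = 3 * r := by ring
end
end
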